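/- If X ⊆ X₋^ℓ supports a spherical 2-design and M is an invertible linear map with Mᵀ u = u satisfying M⁻¹ X ⊆ X₋^ℓ, then |det M| ≥ 1, with equality if and only if M is orthogonal. Consequently the identity (range X₋^ℓ itself) is the unique minimum-volume consistent body: the sphere X₋^ℓ is the minimizer of vol(M X₋^ℓ) over all such M. -/

import Mathlib

/-!
Put `A = M⁻¹`. Every point `w` of `X₋^ℓ` satisfies `|w|² ≤ 2/|u|²`, so averaging `|A v_k|²`
against the design weights bounds `tr(A S Aᵀ)` by `2/|u|²`, where `S` is the prescribed second
moment. Since `Aᵀu = u`, we have `⟨û, Aû⟩ = 1` and hence `|Aû| ≥ 1`; expanding `S` this forces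
`tr(A Aᵀ) ≤ ℓ`. Now `A Aᵀ = (MᵀM)⁻¹` is positive definite, so AM–GM on its eigenvalues gives
`det (MᵀM)⁻¹ ≤ 1`, with equality only if every eigenvalue is `1`, i.e. `MᵀM = 1`.
-/

open Matrix Finset

/-- `g(w) = |w|₂ − √2 û·w`. -/
noncomputable def gFun {ℓ : ℕ} (u : Fin ℓ → ℝ) (w : Fin ℓ → ℝ) : ℝ :=
  Real.sqrt (w ⬝ᵥ w) - Real.sqrt 2 * (((Real.sqrt (u ⬝ᵥ u))⁻¹ • u) ⬝ᵥ w)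

/-- The spherical state space `X₋^ℓ`. -/
noncomputable def sphericalStateSpace {ℓ : ℕ} (u : Fin ℓ → ℝ) : Set (Fin ℓ → ℝ) :=
  {v | gFun u v ≤ 0 ∧ u ⬝ᵥ v = 1}

namespace Real

theorem sum_sub_one_sub_log_le_neg_log_prod {ι : Type*} [Fintype ι] {f : ι → ℝ}
    (hf : ∀ i, 0 < f i) (hs : ∑ i, f i ≤ Fintype.card ι) :
    ∑ i, (f i - 1 - log (f i)) ≤ -log (∏ i, f i) := by
  rw [log_prod fun i _ => (hf i).ne', sum_sub_distrib, sum_sub_distrib]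
  simp only [sum_const, card_univ, nsmul_eq_mul, mul_one]
  linarith

theorem prod_le_one_of_sum_le_card {ι : Type*} [Fintype ι] {f : ι → ℝ}
    (hf : ∀ i, 0 < f i) (hs : ∑ i, f i ≤ Fintype.card ι) : ∏ i, f i ≤ 1 := by
  have hnonneg : 0 ≤ ∑ i, (f i - 1 - log (f i)) :=
    sum_nonneg fun i _ => by linarith [log_le_sub_one_of_pos (hf i)]
  have := sum_sub_one_sub_log_le_neg_log_prod hf hs
  exact (log_nonpos_iff (prod_pos fun i _ => hf i).le).mp (by linarith)

theorem eq_one_of_prod_eq_one_of_sum_le_card {ι : Type*} [Fintype ι] {f : ι → ℝ}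
    (hf : ∀ i, 0 < f i) (hs : ∑ i, f i ≤ Fintype.card ι) (hp : ∏ i, f i = 1) (i : ι) :
    f i = 1 := by
  have hterm (j : ι) : 0 ≤ f j - 1 - log (f j) := by linarith [log_le_sub_one_of_pos (hf j)]
  have hsum := sum_sub_one_sub_log_le_neg_log_prod hf hs
  rw [hp, log_one, neg_zero] at hsum
  have hi := (sum_eq_zero_iff_of_nonneg fun j _ => hterm j).mp
    (hsum.antisymm (sum_nonneg fun j _ => hterm j)) i (mem_univ i)
  by_contra hne
  linarith [log_lt_sub_one_of_pos (hf i) hne]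

end Real

namespace Matrix

theorem trace_mul_vecMulVec_self_mul_transpose {m n R : Type*} [Fintype m] [Fintype n]
    [CommSemiring R] (A : Matrix m n R) (x : n → R) :
    trace (A * vecMulVec x x * Aᵀ) = (A *ᵥ x) ⬝ᵥ (A *ᵥ x) := by
  rw [mul_vecMulVec, vecMulVec_mul, vecMul_transpose, trace_vecMulVec]

theorem sum_mul_dotProduct_mulVec_self {ι m n R : Type*} [Fintype ι] [Fintype m] [Fintype n]
    [CommSemiring R] (A : Matrix m n R) (p : ι → R) (v : ι → n → R) :
    ∑ k, p k * ((A *ᵥ v k) ⬝ᵥ (A *ᵥ v k)) =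
      trace (A * (∑ k, p k • vecMulVec (v k) (v k)) * Aᵀ) := by
  simp only [Matrix.mul_sum, Matrix.sum_mul, Matrix.mul_smul, Matrix.smul_mul, trace_sum,
    trace_smul, trace_mul_vecMulVec_self_mul_transpose, smul_eq_mul]

theorem dotProduct_self_le_mulVec_dotProduct_self {n R : Type*} [Fintype n] [CommRing R]
    [LinearOrder R] [IsStrictOrderedRing R] {A : Matrix n n R} {x : n → R}
    (hA : Aᵀ *ᵥ x = x) : x ⬝ᵥ x ≤ (A *ᵥ x) ⬝ᵥ (A *ᵥ x) := by
  have hx : x ⬝ᵥ (A *ᵥ x) = x ⬝ᵥ x := by rw [dotProduct_mulVec, ← mulVec_transpose, hA]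
  have hsq : 0 ≤ (A *ᵥ x - x) ⬝ᵥ (A *ᵥ x - x) := sum_nonneg fun i _ => mul_self_nonneg _
  rw [sub_dotProduct, dotProduct_sub, dotProduct_sub, dotProduct_comm (A *ᵥ x) x, hx] at hsq
  linarith

section PosDef

variable {n : Type*} [Fintype n] [DecidableEq n] {A : Matrix n n ℝ}

theorem IsHermitian.eq_one_of_eigenvalues_eq_one (hA : A.IsHermitian)
    (h : ∀ i, hA.eigenvalues i = 1) : A = 1 := by
  rw [hA.spectral_theorem, Unitary.conjStarAlgAut_apply]
  have hd : (RCLike.ofReal ∘ hA.eigenvalues : n → ℝ) = fun _ => 1 := funext fun i => by simp [h i]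
  rw [hd, diagonal_one, mul_one]
  exact mem_unitaryGroup_iff.mp hA.eigenvectorUnitary.2

theorem PosDef.det_le_one_of_trace_le_card (hA : A.PosDef) (ht : A.trace ≤ Fintype.card n) :
    A.det ≤ 1 := by
  rw [hA.isHermitian.det_eq_prod_eigenvalues]
  rw [hA.isHermitian.trace_eq_sum_eigenvalues] at ht
  simpa using Real.prod_le_one_of_sum_le_card hA.eigenvalues_pos (by simpa using ht)

theorem PosDef.eq_one_of_det_eq_one_of_trace_le_card (hA : A.PosDef)
    (ht : A.trace ≤ Fintype.card n) (hd : A.det = 1) : A = 1 := by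
  rw [hA.isHermitian.det_eq_prod_eigenvalues] at hd
  rw [hA.isHermitian.trace_eq_sum_eigenvalues] at ht
  exact hA.isHermitian.eq_one_of_eigenvalues_eq_one
    (Real.eq_one_of_prod_eq_one_of_sum_le_card hA.eigenvalues_pos (by simpa using ht)
      (by simpa using hd))

theorem one_le_abs_det_of_trace_inv_mul_inv_transpose_le_card {M : Matrix n n ℝ}
    (hM : IsUnit M.det) (ht : (M⁻¹ * M⁻¹ᵀ).trace ≤ Fintype.card n) :
    1 ≤ |M.det| ∧ (|M.det| = 1 ↔ Mᵀ * M = 1) := by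
  have hMTM : IsUnit (Mᵀ * M).det := by rw [det_mul, det_transpose]; exact hM.mul hM
  have hinv : (Mᵀ * M)⁻¹ = M⁻¹ * M⁻¹ᵀ := by rw [mul_inv_rev, transpose_nonsing_inv]
  have hPD : ((Mᵀ * M)⁻¹).PosDef := by
    refine PosDef.inv ?_
    have hinj : Function.Injective M.mulVec :=
      mulVec_injective_iff_isUnit.mpr ((isUnit_iff_isUnit_det M).mpr hM)
    simpa [conjTranspose_eq_transpose_of_trivial] using PosDef.conjTranspose_mul_self M hinj
  have hdet : ((Mᵀ * M)⁻¹).det = (M.det ^ 2)⁻¹ := by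
    rw [det_nonsing_inv, Ring.inverse_eq_inv', det_mul, det_transpose, sq]
  rw [← hinv] at ht
  have hle := hPD.det_le_one_of_trace_le_card ht
  have hdet0 := hM.ne_zero
  rw [hdet, inv_le_one₀ (by positivity)] at hle
  refine ⟨one_le_sq_iff_one_le_abs _ |>.mp hle, ⟨fun habs => ?_, fun horth => ?_⟩⟩
  · have hd : ((Mᵀ * M)⁻¹).det = 1 := by rw [hdet, ← sq_abs, habs]; norm_num
    rw [← nonsing_inv_nonsing_inv _ hMTM, hPD.eq_one_of_det_eq_one_of_trace_le_card ht hd, inv_one]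
  · have := congrArg det horth
    rw [det_mul, det_transpose, det_one, ← sq, ← sq_abs] at this
    exact (pow_eq_one_iff_of_nonneg (abs_nonneg _) two_ne_zero).mp this

end PosDef

end Matrix

theorem dotProduct_inv_sqrt_smul_self {n : Type*} [Fintype n] {u : n → ℝ} (hu : u ≠ 0) :
    ((Real.sqrt (u ⬝ᵥ u))⁻¹ • u) ⬝ᵥ ((Real.sqrt (u ⬝ᵥ u))⁻¹ • u) = 1 := by
  have hpos : 0 < u ⬝ᵥ u := by simpa using dotProduct_star_self_pos_iff.mpr hu
  rw [smul_dotProduct, dotProduct_smul, smul_eq_mul, smul_eq_mul, ← mul_assoc, ← mul_inv,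
    Real.mul_self_sqrt hpos.le, inv_mul_cancel₀ hpos.ne']

theorem dotProduct_self_le_of_mem_sphericalStateSpace {ℓ : ℕ} {u w : Fin ℓ → ℝ}
    (hw : w ∈ sphericalStateSpace u) : w ⬝ᵥ w ≤ 2 / (u ⬝ᵥ u) := by
  obtain ⟨hg, huw⟩ := hw
  have hu : 0 ≤ u ⬝ᵥ u := by simpa using dotProduct_star_self_nonneg u
  rw [gFun, smul_dotProduct, huw, smul_eq_mul, mul_one, ← div_eq_mul_inv,
    ← Real.sqrt_div' _ hu, sub_nonpos] at hg
  exact (Real.sqrt_le_sqrt_iff (by positivity)).mp hg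

/-- The second moment `∑ p_k v_k v_kᵀ` of a spherical 2-design supported in `X₋^ℓ`. -/
noncomputable def sphericalSecondMoment {ℓ : ℕ} (u : Fin ℓ → ℝ) : Matrix (Fin ℓ) (Fin ℓ) ℝ :=
  (1 / (u ⬝ᵥ u)) •
    ((1 / ((ℓ : ℝ) - 1)) • (1 : Matrix (Fin ℓ) (Fin ℓ) ℝ)
      + (((ℓ : ℝ) - 2) / ((ℓ : ℝ) - 1)) •
        vecMulVec ((Real.sqrt (u ⬝ᵥ u))⁻¹ • u) ((Real.sqrt (u ⬝ᵥ u))⁻¹ • u))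

theorem trace_mul_transpose_le_of_twoDesign {ℓ : ℕ} (hℓ : 2 ≤ ℓ) {u : Fin ℓ → ℝ}
    (hu : u ≠ 0) {ι : Type*} [Fintype ι] {p : ι → ℝ} {v : ι → Fin ℓ → ℝ}
    (hp : ∀ k, 0 ≤ p k) (hp1 : ∑ k, p k = 1)
    (hdesign : ∑ k, p k • vecMulVec (v k) (v k) = sphericalSecondMoment u)
    {A : Matrix (Fin ℓ) (Fin ℓ) ℝ} (hAu : Aᵀ *ᵥ u = u)
    (hAv : ∀ k, A *ᵥ v k ∈ sphericalStateSpace u) :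
    trace (A * Aᵀ) ≤ ℓ := by
  have hn : 0 < u ⬝ᵥ u := by simpa using dotProduct_star_self_pos_iff.mpr hu
  have hℓ2 : (2 : ℝ) ≤ ℓ := by exact_mod_cast hℓ
  have hℓ1 : (0 : ℝ) < ℓ - 1 := by linarith
  have hmean : ∑ k, p k * ((A *ᵥ v k) ⬝ᵥ (A *ᵥ v k)) ≤ 2 / (u ⬝ᵥ u) :=
    calc ∑ k, p k * ((A *ᵥ v k) ⬝ᵥ (A *ᵥ v k)) ≤ ∑ k, p k * (2 / (u ⬝ᵥ u)) :=
          sum_le_sum fun k _ => mul_le_mul_of_nonneg_left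
            (dotProduct_self_le_of_mem_sphericalStateSpace (hAv k)) (hp k)
      _ = 2 / (u ⬝ᵥ u) := by rw [← sum_mul, hp1, one_mul]
  rw [sum_mul_dotProduct_mulVec_self, hdesign, sphericalSecondMoment] at hmean
  simp only [Matrix.mul_add, Matrix.add_mul, Matrix.mul_smul, Matrix.smul_mul, trace_add,
    trace_smul, mul_one, trace_mul_vecMulVec_self_mul_transpose, smul_eq_mul] at hmean
  have hs : 1 ≤ (A *ᵥ ((√(u ⬝ᵥ u))⁻¹ • u)) ⬝ᵥ (A *ᵥ ((√(u ⬝ᵥ u))⁻¹ • u)) := by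
    rw [← dotProduct_inv_sqrt_smul_self hu]
    exact dotProduct_self_le_mulVec_dotProduct_self (by rw [mulVec_smul, hAu])
  rw [one_div_mul_eq_div, div_le_div_iff_of_pos_right hn, div_mul_eq_mul_div,
    div_mul_eq_mul_div, one_mul, ← add_div, div_le_iff₀ hℓ1] at hmean
  nlinarith [mul_le_mul_of_nonneg_left hs (sub_nonneg.mpr hℓ2)]

theorem two_design_det_ge_one_general
    (ℓ : ℕ) (hℓ : 2 ≤ ℓ) (u : Fin ℓ → ℝ) (hu : u ≠ 0)
    (X : Set (Fin ℓ → ℝ))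
    (hdesign : ∃ (K : ℕ) (p : Fin K → ℝ) (v : Fin K → Fin ℓ → ℝ),
      (∀ k, 0 < p k) ∧ ∑ k, p k = 1 ∧ (∀ k, v k ∈ X) ∧
      ∑ k, p k • vecMulVec (v k) (v k)
        = (1 / (u ⬝ᵥ u)) •
          ((1 / ((ℓ : ℝ) - 1)) • (1 : Matrix (Fin ℓ) (Fin ℓ) ℝ)
            + (((ℓ : ℝ) - 2) / ((ℓ : ℝ) - 1)) •
              vecMulVec ((Real.sqrt (u ⬝ᵥ u))⁻¹ • u) ((Real.sqrt (u ⬝ᵥ u))⁻¹ • u)))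
    (M : Matrix (Fin ℓ) (Fin ℓ) ℝ) (hM : IsUnit M.det)
    (hMu : Mᵀ.mulVec u = u)
    (hincl : M⁻¹.mulVec '' X ⊆ sphericalStateSpace u) :
    1 ≤ |M.det| ∧ (|M.det| = 1 ↔ Mᵀ * M = 1) := by
  obtain ⟨K, p, v, hp, hp1, hvX, hSecondMoment⟩ := hdesign
  have hInvTu : M⁻¹ᵀ *ᵥ u = u := by
    have := M.invertibleOfIsUnitDet hM
    rw [transpose_nonsing_inv]
    exact inv_mulVec_eq_vec hMu.symm
  have htrace := trace_mul_transpose_le_of_twoDesign hℓ hu (fun k => (hp k).le) hp1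
    hSecondMoment hInvTu fun k => hincl ⟨v k, hvX k, rfl⟩
  exact one_le_abs_det_of_trace_inv_mul_inv_transpose_le_card hM (by simpa using htrace)

/-- If `X ⊆ X₋^ℓ` supports a spherical 2-design and the invertible map `M` with
`Mᵀu = u` satisfies `M⁻¹ X ⊆ X₋^ℓ`, then `|det M| ≥ 1`, with equality iff `M`
is orthogonal; hence the sphere itself is the minimum-volume consistent body. -/
theorem two_design_det_ge_one
    (ℓ : ℕ) (hℓ : 2 ≤ ℓ) (u : Fin ℓ → ℝ) (hu : u ≠ 0)
    (X : Set (Fin ℓ → ℝ)) (hX : X ⊆ sphericalStateSpace u)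
    (hdesign : ∃ (K : ℕ) (p : Fin K → ℝ) (v : Fin K → Fin ℓ → ℝ),
      (∀ k, 0 < p k) ∧ ∑ k, p k = 1 ∧ (∀ k, v k ∈ X) ∧
      ∑ k, p k • vecMulVec (v k) (v k)
        = (1 / (u ⬝ᵥ u)) •
          ((1 / ((ℓ : ℝ) - 1)) • (1 : Matrix (Fin ℓ) (Fin ℓ) ℝ)
            + (((ℓ : ℝ) - 2) / ((ℓ : ℝ) - 1)) •
              vecMulVec ((Real.sqrt (u ⬝ᵥ u))⁻¹ • u) ((Real.sqrt (u ⬝ᵥ u))⁻¹ • u)))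
    (M : Matrix (Fin ℓ) (Fin ℓ) ℝ) (hM : IsUnit M.det)
    (hMu : Mᵀ.mulVec u = u)
    (hincl : M⁻¹.mulVec '' X ⊆ sphericalStateSpace u) :
    1 ≤ |M.det| ∧ (|M.det| = 1 ↔ Mᵀ * M = 1) :=
  two_design_det_ge_one_general ℓ hℓ u hu X hdesign M hM hMu hincl
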